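/- Let U_mb be the 4×4 unitary matrix sending the computational basis of ℂ²⊗ℂ² to the magic basis: U_mb|00⟩ = Φ⁺, U_mb|01⟩ = −i Φ⁻, U_mb|10⟩ = Ψ⁻, U_mb|11⟩ = −i Ψ⁺. Then for all 2×2 complex unitary matrices U₁, U₂ with det U₁ = det U₂ = 1, every entry of the matrix U_mb† (U₁ ⊗ U₂) U_mb is real; consequently U_mb† (U₁ ⊗ U₂) U_mb is a real orthogonal 4×4 matrix. -/

import Mathlib

open Complex Matrix Kronecker

/-- Bell state `Φ⁺ = (|00⟩ + |11⟩)/√2`. -/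
noncomputable def PhiP : Fin 2 × Fin 2 → ℂ := fun x =>
  ((if x = (0, 0) then 1 else 0) + (if x = (1, 1) then 1 else 0)) / Real.sqrt 2

/-- Bell state `Φ⁻ = (|00⟩ − |11⟩)/√2`. -/
noncomputable def PhiM : Fin 2 × Fin 2 → ℂ := fun x =>
  ((if x = (0, 0) then 1 else 0) - (if x = (1, 1) then 1 else 0)) / Real.sqrt 2

/-- Bell state `Ψ⁺ = (|01⟩ + |10⟩)/√2`. -/
noncomputable def PsiP : Fin 2 × Fin 2 → ℂ := fun x =>
  ((if x = (0, 1) then 1 else 0) + (if x = (1, 0) then 1 else 0)) / Real.sqrt 2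

/-- Bell state `Ψ⁻ = (|01⟩ − |10⟩)/√2`. -/
noncomputable def PsiM : Fin 2 × Fin 2 → ℂ := fun x =>
  ((if x = (0, 1) then 1 else 0) - (if x = (1, 0) then 1 else 0)) / Real.sqrt 2

/-- The magic-basis matrix: its columns are `Φ⁺, −iΦ⁻, Ψ⁻, −iΨ⁺`. -/
noncomputable def Umb : Matrix (Fin 2 × Fin 2) (Fin 2 × Fin 2) ℂ :=
  Matrix.of fun r c =>
    if c = (0, 0) then PhiP r
    else if c = (0, 1) then -Complex.I * PhiM r
    else if c = (1, 0) then PsiM r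
    else -Complex.I * PsiP r

lemma su2_entries' (U : Matrix (Fin 2) (Fin 2) ℂ)
    (hU : U ∈ Matrix.unitaryGroup (Fin 2) ℂ) (hd : U.det = 1) :
    U 1 1 = (starRingEnd ℂ) (U 0 0) ∧ U 1 0 = -(starRingEnd ℂ) (U 0 1) := by
  have h1 : star U * U = 1 := hU.1
  have h2 : U * U.adjugate = 1 := by rw [Matrix.mul_adjugate, hd, one_smul]
  have h3 : star U = U.adjugate := by
    calc star U = star U * (U * U.adjugate) := by rw [h2, mul_one]
    _ = (star U * U) * U.adjugate := by rw [mul_assoc]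
    _ = U.adjugate := by rw [h1, one_mul]
  have h4 : star U 0 0 = U.adjugate 0 0 := by rw [h3]
  have h5 : star U 0 1 = U.adjugate 0 1 := by rw [h3]
  rw [Matrix.adjugate_fin_two] at h4 h5
  simp [Matrix.star_apply] at h4 h5
  constructor
  · exact h4.symm
  · have := congrArg (starRingEnd ℂ) h5
    simpa using this

lemma Umb_unitary' : Umbᴴ * Umb = 1 := by
  have hs : Real.sqrt 2 * Real.sqrt 2 = 2 := Real.mul_self_sqrt (by norm_num)
  have h0 : Real.sqrt 2 ≠ 0 := by positivity
  ext ⟨r1, r2⟩ ⟨c1, c2⟩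
  fin_cases r1 <;> fin_cases r2 <;> fin_cases c1 <;> fin_cases c2 <;>
  · simp only [Matrix.mul_apply, Fintype.sum_prod_type, Fin.sum_univ_two,
      Matrix.conjTranspose_apply, Umb, Matrix.of_apply, PhiP, PhiM, PsiP, PsiM,
      Matrix.one_apply, Prod.mk.injEq]
    norm_num [Complex.ext_iff]
    try field_simp
    all_goals (simp only [show Real.sqrt 2 ^ 4 = (Real.sqrt 2 ^ 2) ^ 2 by ring,
      Real.sq_sqrt (show (0:ℝ) ≤ 2 by norm_num)]; norm_num)

set_option maxHeartbeats 1600000 in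
theorem su2_tensor_su2_real_in_magic_basis
    (U₁ U₂ : Matrix (Fin 2) (Fin 2) ℂ)
    (hU₁ : U₁ ∈ Matrix.unitaryGroup (Fin 2) ℂ)
    (hU₂ : U₂ ∈ Matrix.unitaryGroup (Fin 2) ℂ)
    (hd₁ : U₁.det = 1) (hd₂ : U₂.det = 1) :
    (∀ r c : Fin 2 × Fin 2, ((Umbᴴ * (U₁ ⊗ₖ U₂) * Umb) r c).im = 0) ∧
    (Matrix.of fun r c : Fin 2 × Fin 2 => ((Umbᴴ * (U₁ ⊗ₖ U₂) * Umb) r c).re) *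
      (Matrix.of fun r c : Fin 2 × Fin 2 => ((Umbᴴ * (U₁ ⊗ₖ U₂) * Umb) r c).re)ᵀ
      = 1 := by
  obtain ⟨e1, e2⟩ := su2_entries' U₁ hU₁ hd₁
  obtain ⟨f1, f2⟩ := su2_entries' U₂ hU₂ hd₂
  have hs : Real.sqrt 2 * Real.sqrt 2 = 2 := Real.mul_self_sqrt (by norm_num)
  have h0 : Real.sqrt 2 ≠ 0 := by positivity
  have hp2 : Real.sqrt 2 ^ 2 = 2 := by rw [pow_two, hs]
  have hp3 : Real.sqrt 2 ^ 3 = 2 * Real.sqrt 2 := by rw [pow_succ, hp2]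
  have hp4 : Real.sqrt 2 ^ 4 = 4 := by rw [pow_succ, hp3]; nlinarith [hs]
  have hinv : (Real.sqrt 2)⁻¹ = Real.sqrt 2 / 2 := by
    field_simp
    rw [hp2]
  have him : ∀ r c : Fin 2 × Fin 2, ((Umbᴴ * (U₁ ⊗ₖ U₂) * Umb) r c).im = 0 := by
    rintro ⟨r1, r2⟩ ⟨c1, c2⟩
    fin_cases r1 <;> fin_cases r2 <;> fin_cases c1 <;> fin_cases c2 <;>
    · simp only [Matrix.mul_apply, Fintype.sum_prod_type, Fin.sum_univ_two,
        Matrix.conjTranspose_apply, Umb, Matrix.of_apply, kroneckerMap_apply,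
        PhiP, PhiM, PsiP, PsiM, e1, e2, f1, f2, Prod.mk.injEq]
      norm_num
      try (simp only [div_eq_mul_inv, hinv]; ring_nf;
           try simp only [hp2, hp3, hp4]; try ring)
  refine ⟨him, ?_⟩
  -- unitarity of M
  set M := Umbᴴ * (U₁ ⊗ₖ U₂) * Umb with hMdef
  have hu1 : Umbᴴ * Umb = 1 := Umb_unitary'
  have hu2 : Umb * Umbᴴ = 1 := mul_eq_one_comm.mp hu1
  have hKT : (U₁ ⊗ₖ U₂)ᴴ = (U₁ᴴ ⊗ₖ U₂ᴴ) := by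
    ext ⟨i, j⟩ ⟨k, l⟩
    simp [Matrix.conjTranspose_apply, Matrix.kroneckerMap_apply, _root_.map_mul]
  have hK : (U₁ ⊗ₖ U₂) * (U₁ ⊗ₖ U₂)ᴴ = 1 := by
    rw [hKT, ← Matrix.mul_kronecker_mul]
    have a1 : U₁ * U₁ᴴ = 1 := by
      have := hU₁.2; rwa [Matrix.star_eq_conjTranspose] at this
    have a2 : U₂ * U₂ᴴ = 1 := by
      have := hU₂.2; rwa [Matrix.star_eq_conjTranspose] at this
    rw [a1, a2, Matrix.one_kronecker_one]
  have hM : M * Mᴴ = 1 := by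
    rw [hMdef]
    simp only [Matrix.conjTranspose_mul, Matrix.conjTranspose_conjTranspose,
      Matrix.mul_assoc]
    rw [← Matrix.mul_assoc Umb Umbᴴ, hu2, one_mul,
        ← Matrix.mul_assoc (U₁ ⊗ₖ U₂) (U₁ ⊗ₖ U₂)ᴴ, hK, one_mul, hu1]
  ext r c
  have h1 : ∑ k, M r k * (starRingEnd ℂ) (M c k) = (1 : Matrix (Fin 2 × Fin 2) (Fin 2 × Fin 2) ℂ) r c := by
    have := congrFun (congrFun hM r) c
    rwa [Matrix.mul_apply] at this
  have h2 := congrArg Complex.re h1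
  rw [Complex.re_sum] at h2
  simp only [Complex.mul_re, Complex.conj_re, Complex.conj_im, him, mul_zero,
    mul_neg, zero_mul, neg_zero, sub_zero, add_zero] at h2
  simp only [Matrix.mul_apply, Matrix.of_apply, Matrix.transpose_apply]
  rw [h2]
  by_cases h : r = c <;> simp [Matrix.one_apply, h]
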